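/- Fix an integer d ≥ 1 and let β > 1/2. There exists a constant C > 0 depending only on β such that: if A : E × E → ℂ is an infinite matrix with |A|_{β+} < ∞, then A defines a bounded linear operator on ℓ²(E), its operator exponential e^A (defined by the norm-convergent exponential series of bounded operators on ℓ²(E)) has matrix entries (e^A)_a^b = ⟨δ_a, e^A δ_b⟩ where δ_a is the standard basis, and the matrix e^A − Id satisfies |e^A − Id|_{β+} ≤ e^{C·|A|_{β+}} · |A|_{β+}. -/

import Mathlib

/-!
With `j = d + 2k`, `j' = d + 2k'`, `j_m = d + 2m`, write `c(k, k') = w(k, k')⁻¹` for the weight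
`w = (1 + |j - j'|)(1 + ln j)^β (1 + ln j')^β` and `p(k, m) = ((1 + |j - j_m|)(1 + ln j_m)^{2β})⁻¹`.
The row sums of `p` are bounded by a constant `K`, because `∑ₙ ((n + 1)(1 + ln (n + 1))^{2β})⁻¹`
converges for `2β > 1`, and `c(k, k')² = p(k, k') p(k', k)`; so Schur's test turns the block
bounds `‖A_{[k]}^{[k']}‖ ≤ M c(k, k')` into a bounded operator on `ℓ²`.
The triangle inequality `1 + |j₁ - j₂| ≤ (1 + |j₁ - j|) + (1 + |j - j₂|)` gives
`∑ₖ c(k₁, k) c(k, k₂) ≤ 2K c(k₁, k₂)`, so the blocks of `Aⁿ⁺¹` are bounded by `M (2KM)ⁿ c`, and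
summing the exponential series bounds the blocks of `e^A - 1` by `e^{2KM} M c`.
-/

open scoped Classical

/-- `hermiteDim d j` is the number of `d`-tuples of odd natural numbers summing to `j`,
i.e. the multiplicity `d_j` of the eigenvalue `j` of the `d`-dimensional harmonic oscillator. -/
noncomputable def hermiteDim (d j : ℕ) : ℕ :=
  ((Finset.univ : Finset (Fin d → Fin (j + 1))).filter
    (fun f => (∀ i, Odd ((f i : ℕ))) ∧ ∑ i, ((f i : ℕ)) = j)).card

/-- The index set `E = {(j, l) : j ∈ Ê, 1 ≤ l ≤ d_j}`, encoded as pairs `⟨k, l⟩` where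
`j = d + 2k` runs over `Ê = {d, d+2, …}` and `l` runs over a set of cardinality `d_j`. -/
abbrev IndexE (d : ℕ) : Type := Σ k : ℕ, Fin (hermiteDim d (d + 2 * k))

/-- The eigenvalue `w_a` attached to `a ∈ E`. -/
def wE (d : ℕ) (a : IndexE d) : ℕ := d + 2 * a.1

/-- The operator norm of the block `A_{[j]}^{[j']}`, `j = d + 2k`, `j' = d + 2k'`, of an
infinite matrix `A : E × E → ℂ`, as a linear map between the corresponding Euclidean spaces. -/
noncomputable def blockNorm (d : ℕ) (A : IndexE d → IndexE d → ℂ) (k k' : ℕ) : ℝ :=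
  ‖LinearMap.toContinuousLinearMap (Matrix.toEuclideanLin
      (Matrix.of fun (i : Fin (hermiteDim d (d + 2 * k)))
        (i' : Fin (hermiteDim d (d + 2 * k'))) => A ⟨k, i⟩ ⟨k', i'⟩))‖

/-- The weight `(1 + ln j)^β (1 + ln j')^β` with `j = d + 2k`, `j' = d + 2k'`. -/
noncomputable def wtBeta (d : ℕ) (β : ℝ) (k k' : ℕ) : ℝ :=
  (1 + Real.log ((d : ℝ) + 2 * k)) ^ β * (1 + Real.log ((d : ℝ) + 2 * k')) ^ β

/-- The weight `(1 + |j - j'|)(1 + ln j)^β (1 + ln j')^β` with `j = d + 2k`, `j' = d + 2k'`. -/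
noncomputable def wtBetaPlus (d : ℕ) (β : ℝ) (k k' : ℕ) : ℝ :=
  (1 + |((d : ℝ) + 2 * k) - ((d : ℝ) + 2 * k')|) * wtBeta d β k k'

open scoped lp Matrix Matrix.Norms.L2Operator Nat

theorem summable_and_sq_tsum_le_of_sq_le_mul {ι : Type*} {r f g : ι → ℝ}
    (hr : ∀ i, 0 ≤ r i) (hf : ∀ i, 0 ≤ f i) (hg : ∀ i, 0 ≤ g i)
    (hfs : Summable f) (hgs : Summable g) (h : ∀ i, r i ^ 2 ≤ f i * g i) :
    Summable r ∧ (∑' i, r i) ^ 2 ≤ (∑' i, f i) * ∑' i, g i := by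
  have hrs : Summable r := .of_nonneg_of_le hr
    (fun i => by nlinarith [sq_nonneg (f i - g i), h i, hf i, hg i, hr i])
    ((hfs.add hgs).div_const 2)
  have hFG : 0 ≤ (∑' i, f i) * ∑' i, g i := mul_nonneg (tsum_nonneg hf) (tsum_nonneg hg)
  refine ⟨hrs, (Real.le_sqrt (tsum_nonneg hr) hFG).1 (hrs.tsum_le_of_sum_le fun s => ?_)⟩
  refine Real.le_sqrt_of_sq_le ((s.sum_sq_le_sum_mul_sum_of_sq_le_mul (fun i _ => hf i)
    (fun i _ => hg i) (fun i _ => h i)).trans ?_)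
  exact mul_le_mul (hfs.sum_le_tsum s fun i _ => hf i) (hgs.sum_le_tsum s fun i _ => hg i)
    (s.sum_nonneg fun i _ => hg i) (tsum_nonneg hf)

/-- `c` is dominated by a kernel `p` with row sums at most `K`, in the two forms needed by
Schur's test (`sq_le`) and by the composition of block bounds (`mul_le`). -/
structure IsSchurWeight {ι : Type*} (c p : ι → ι → ℝ) (K : ℝ) : Prop where
  nonneg : ∀ k k', 0 ≤ c k k'
  kernel_nonneg : ∀ k k', 0 ≤ p k k'
  summable_kernel : ∀ k, Summable (p k)
  tsum_kernel_le : ∀ k, ∑' k', p k k' ≤ K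
  sq_le : ∀ k k', c k k' ^ 2 ≤ p k k' * p k' k
  mul_le : ∀ k₁ k k₂, c k₁ k * c k k₂ ≤ c k₁ k₂ * (p k₁ k + p k₂ k)

namespace IsSchurWeight

variable {ι : Type*} {c p : ι → ι → ℝ} {K : ℝ}

theorem kernel_le (hc : IsSchurWeight c p K) (k k' : ι) : p k k' ≤ K :=
  ((hc.summable_kernel k).le_tsum k' fun m _ => hc.kernel_nonneg k m).trans (hc.tsum_kernel_le k)

theorem const_nonneg (hc : IsSchurWeight c p K) (k : ι) : 0 ≤ K :=
  (hc.kernel_nonneg k k).trans (hc.kernel_le k k)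

theorem summable_sq (hc : IsSchurWeight c p K) (k : ι) : Summable fun k' => c k k' ^ 2 :=
  .of_nonneg_of_le (fun _ => sq_nonneg _)
    (fun k' => (hc.sq_le k k').trans (mul_le_mul_of_nonneg_left (hc.kernel_le k' k)
      (hc.kernel_nonneg k k')))
    ((hc.summable_kernel k).mul_right K)

theorem summable_mul_and_sq_tsum_le (hc : IsSchurWeight c p K) (k : ι) {u : ι → ℝ}
    (hu : ∀ k, 0 ≤ u k) (hu2 : Summable fun k => u k ^ 2) :
    Summable (fun k' => c k k' * u k') ∧
      (∑' k', c k k' * u k') ^ 2 ≤ K * ∑' k', p k' k * u k' ^ 2 := by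
  have hg : Summable fun k' => p k' k * u k' ^ 2 :=
    .of_nonneg_of_le (fun k' => mul_nonneg (hc.kernel_nonneg k' k) (sq_nonneg _))
      (fun k' => mul_le_mul_of_nonneg_right (hc.kernel_le k' k) (sq_nonneg _))
      (hu2.mul_left K)
  obtain ⟨hs, hle⟩ := summable_and_sq_tsum_le_of_sq_le_mul
    (fun k' => mul_nonneg (hc.nonneg k k') (hu k')) (hc.kernel_nonneg k)
    (fun k' => mul_nonneg (hc.kernel_nonneg k' k) (sq_nonneg _)) (hc.summable_kernel k) hg
    (fun k' => by rw [mul_pow, ← mul_assoc]; gcongr; exacts [hc.sq_le k k'])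
  exact ⟨hs, hle.trans (mul_le_mul_of_nonneg_right (hc.tsum_kernel_le k)
    (tsum_nonneg fun k' => mul_nonneg (hc.kernel_nonneg k' k) (sq_nonneg _)))⟩

theorem summable_and_tsum_sq_tsum_mul_le (hc : IsSchurWeight c p K) {u : ι → ℝ}
    (hu : ∀ k, 0 ≤ u k) (hu2 : Summable fun k => u k ^ 2) :
    Summable (fun k => (∑' k', c k k' * u k') ^ 2) ∧
      ∑' k, (∑' k', c k k' * u k') ^ 2 ≤ K ^ 2 * ∑' k, u k ^ 2 := by
  have hrow (k : ι) := hc.summable_mul_and_sq_tsum_le k hu hu2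
  have hsum (s : Finset ι) : ∑ k ∈ s, (∑' k', c k k' * u k') ^ 2 ≤ K ^ 2 * ∑' k, u k ^ 2 := by
    obtain rfl | ⟨k₀, -⟩ := s.eq_empty_or_nonempty
    · simpa using mul_nonneg (sq_nonneg K) (tsum_nonneg fun k => sq_nonneg (u k))
    have hcol (k : ι) : Summable fun k' => p k' k * u k' ^ 2 :=
      .of_nonneg_of_le (fun k' => mul_nonneg (hc.kernel_nonneg k' k) (sq_nonneg _))
        (fun k' => mul_le_mul_of_nonneg_right (hc.kernel_le k' k) (sq_nonneg _))
        (hu2.mul_left K)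
    have hrowsum (k' : ι) : ∑ k ∈ s, p k' k ≤ K :=
      ((hc.summable_kernel k').sum_le_tsum s fun m _ => hc.kernel_nonneg k' m).trans
        (hc.tsum_kernel_le k')
    have hsummable : Summable fun k' => (∑ k ∈ s, p k' k) * u k' ^ 2 := by
      simpa only [Finset.sum_mul] using summable_sum fun k _ => hcol k
    calc ∑ k ∈ s, (∑' k', c k k' * u k') ^ 2
        ≤ ∑ k ∈ s, K * ∑' k', p k' k * u k' ^ 2 := s.sum_le_sum fun k _ => (hrow k).2
      _ = K * ∑' k', (∑ k ∈ s, p k' k) * u k' ^ 2 := by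
        rw [← s.mul_sum, ← Summable.tsum_finsetSum fun k _ => hcol k]
        simp only [s.sum_mul]
      _ ≤ K * ∑' k', K * u k' ^ 2 := by
        refine mul_le_mul_of_nonneg_left (hsummable.tsum_le_tsum (fun k' => ?_)
          (hu2.mul_left K)) (hc.const_nonneg k₀)
        exact mul_le_mul_of_nonneg_right (hrowsum k') (sq_nonneg _)
      _ = K ^ 2 * ∑' k, u k ^ 2 := by rw [tsum_mul_left, sq, mul_assoc]
  exact ⟨summable_of_sum_le (fun _ => sq_nonneg _) hsum,
    tsum_le_of_sum_le' (by positivity) hsum⟩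

theorem summable_mul_mul (hc : IsSchurWeight c p K) (k₁ k₂ : ι) :
    Summable fun k => c k₁ k * c k k₂ :=
  .of_nonneg_of_le (fun k => mul_nonneg (hc.nonneg k₁ k) (hc.nonneg k k₂))
    (fun k => hc.mul_le k₁ k k₂)
    (((hc.summable_kernel k₁).add (hc.summable_kernel k₂)).mul_left _)

theorem tsum_mul_mul_le (hc : IsSchurWeight c p K) (k₁ k₂ : ι) :
    ∑' k, c k₁ k * c k k₂ ≤ 2 * K * c k₁ k₂ :=
  calc ∑' k, c k₁ k * c k k₂
      ≤ ∑' k, c k₁ k₂ * (p k₁ k + p k₂ k) :=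
        (hc.summable_mul_mul k₁ k₂).tsum_le_tsum (fun k => hc.mul_le k₁ k k₂)
          (((hc.summable_kernel k₁).add (hc.summable_kernel k₂)).mul_left _)
    _ = c k₁ k₂ * (∑' k, p k₁ k + ∑' k, p k₂ k) := by
        rw [tsum_mul_left, (hc.summable_kernel k₁).tsum_add (hc.summable_kernel k₂)]
    _ ≤ c k₁ k₂ * (K + K) := by
        gcongr
        exacts [hc.nonneg k₁ k₂, hc.tsum_kernel_le k₁, hc.tsum_kernel_le k₂]
    _ = 2 * K * c k₁ k₂ := by ring

end IsSchurWeight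

theorem Matrix.sum_norm_sq_le_l2_opNorm_sq {𝕜 m n : Type*} [RCLike 𝕜] [Fintype m] [Fintype n]
    [DecidableEq m] [DecidableEq n] (B : Matrix m n 𝕜) (i : m) :
    ∑ j, ‖B i j‖ ^ 2 ≤ ‖B‖ ^ 2 := by
  have h := Bᴴ.l2_opNorm_mulVec (EuclideanSpace.single i 1)
  rw [l2_opNorm_conjTranspose, PiLp.norm_single, norm_one, mul_one] at h
  have h2 := pow_le_pow_left₀ (norm_nonneg _) h 2
  rw [EuclideanSpace.norm_sq_eq] at h2
  simpa [Matrix.mulVec, dotProduct, Pi.single_apply] using h2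

theorem lp.hasSum_norm_sq {𝕜 α : Type*} [RCLike 𝕜] (ξ : ℓ²(α, 𝕜)) :
    HasSum (fun a => ‖ξ a‖ ^ 2) (‖ξ‖ ^ 2) := by
  simpa using lp.hasSum_norm (p := 2) (by norm_num) ξ

namespace BlockOperator

variable {𝕜 : Type*} [RCLike 𝕜] {ι : Type*} {κ : ι → Type*}

variable (𝕜 κ) in
noncomputable def proj (k : ι) : ℓ²(Σ k, κ k, 𝕜) →L[𝕜] EuclideanSpace 𝕜 (κ k) :=
  (EuclideanSpace.equiv (κ k) 𝕜).symm.toContinuousLinearMap ∘L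
    ContinuousLinearMap.pi fun l => lp.evalCLM 𝕜 (fun _ => 𝕜) 2 ⟨k, l⟩

@[simp]
theorem proj_apply (k : ι) (ξ : ℓ²(Σ k, κ k, 𝕜)) (l : κ k) : proj 𝕜 κ k ξ l = ξ ⟨k, l⟩ := rfl

noncomputable def entry (T : ℓ²(Σ k, κ k, 𝕜) →L[𝕜] ℓ²(Σ k, κ k, 𝕜)) :
    Matrix (Σ k, κ k) (Σ k, κ k) 𝕜 :=
  fun a b => T (lp.single 2 b 1) a

theorem entry_mul (T : ℓ²(Σ k, κ k, 𝕜) →L[𝕜] ℓ²(Σ k, κ k, 𝕜)) (a b : Σ k, κ k) (x : 𝕜) :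
    entry T a b * x = T (lp.single 2 b x) a := by
  rw [entry, mul_comm, ← smul_eq_mul, ← Pi.smul_apply, ← lp.coeFn_smul, ← map_smul,
    ← lp.single_smul, smul_eq_mul, mul_one]

theorem entry_sub_one [DecidableEq (Σ k, κ k)] (T : ℓ²(Σ k, κ k, 𝕜) →L[𝕜] ℓ²(Σ k, κ k, 𝕜))
    (a b : Σ k, κ k) :
    entry (T - 1) a b = T (lp.single 2 b 1) a - if a = b then 1 else 0 := by
  obtain rfl : ‹DecidableEq (Σ k, κ k)› = fun a b => Sigma.instDecidableEqSigma a b :=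
    Subsingleton.elim _ _
  rw [entry, sub_apply, lp.coeFn_sub, Pi.sub_apply, one_apply_eq_self, lp.single_apply,
    Pi.single_apply]

variable [∀ k, Fintype (κ k)]

variable (𝕜 κ) in
noncomputable def incl (k : ι) : EuclideanSpace 𝕜 (κ k) →L[𝕜] ℓ²(Σ k, κ k, 𝕜) :=
  ∑ l, lp.singleContinuousLinearMap 𝕜 (fun _ => 𝕜) 2 ⟨k, l⟩ ∘L EuclideanSpace.proj l

noncomputable def block (k k' : ι) : (ℓ²(Σ k, κ k, 𝕜) →L[𝕜] ℓ²(Σ k, κ k, 𝕜)) →L[𝕜]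
    (EuclideanSpace 𝕜 (κ k') →L[𝕜] EuclideanSpace 𝕜 (κ k)) :=
  ContinuousLinearMap.compL 𝕜 _ _ _ (proj 𝕜 κ k) ∘L
    (ContinuousLinearMap.compL 𝕜 _ _ _).flip (incl 𝕜 κ k')

theorem block_apply (k k' : ι) (T : ℓ²(Σ k, κ k, 𝕜) →L[𝕜] ℓ²(Σ k, κ k, 𝕜)) :
    block k k' T = proj 𝕜 κ k ∘L T ∘L incl 𝕜 κ k' := rfl

theorem incl_apply (k : ι) (v : EuclideanSpace 𝕜 (κ k)) :
    incl 𝕜 κ k v = ∑ l, lp.single 2 (⟨k, l⟩ : Σ k, κ k) (v l) := by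
  simp [incl]

theorem hasSum_incl_proj (ξ : ℓ²(Σ k, κ k, 𝕜)) :
    HasSum (fun k => incl 𝕜 κ k (proj 𝕜 κ k ξ)) ξ :=
  (lp.hasSum_single ENNReal.ofNat_ne_top ξ).sigma fun k => by
    simpa [incl_apply] using hasSum_fintype fun l : κ k =>
      (lp.single 2 (⟨k, l⟩ : Σ k, κ k) (ξ ⟨k, l⟩ : 𝕜) : ℓ²(Σ k, κ k, 𝕜))

theorem hasSum_norm_proj_sq (ξ : ℓ²(Σ k, κ k, 𝕜)) :
    HasSum (fun k => ‖proj 𝕜 κ k ξ‖ ^ 2) (‖ξ‖ ^ 2) := by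
  exact (lp.hasSum_norm_sq ξ).sigma fun k => by
    simpa [EuclideanSpace.norm_sq_eq] using hasSum_fintype fun l : κ k => ‖ξ ⟨k, l⟩‖ ^ 2

theorem hasSum_block_comp (S T : ℓ²(Σ k, κ k, 𝕜) →L[𝕜] ℓ²(Σ k, κ k, 𝕜)) (k₁ k₂ : ι)
    (v : EuclideanSpace 𝕜 (κ k₂)) :
    HasSum (fun k => block k₁ k S (block k k₂ T v)) (block k₁ k₂ (S ∘L T) v) :=
  ((proj 𝕜 κ k₁ ∘L S).hasSum (hasSum_incl_proj (T (incl 𝕜 κ k₂ v))))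

theorem toEuclideanLin_submatrix_entry [∀ k, DecidableEq (κ k)]
    (T : ℓ²(Σ k, κ k, 𝕜) →L[𝕜] ℓ²(Σ k, κ k, 𝕜)) (k k' : ι) :
    LinearMap.toContinuousLinearMap
      (Matrix.toEuclideanLin ((entry T).submatrix (Sigma.mk k) (Sigma.mk k'))) = block k k' T := by
  ext v l
  simp [block_apply, incl_apply, Matrix.mulVec, dotProduct, entry_mul]

theorem norm_submatrix_entry [∀ k, DecidableEq (κ k)]
    (T : ℓ²(Σ k, κ k, 𝕜) →L[𝕜] ℓ²(Σ k, κ k, 𝕜)) (k k' : ι) :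
    ‖(entry T).submatrix (Sigma.mk k) (Sigma.mk k')‖ = ‖block k k' T‖ := by
  rw [Matrix.l2_opNorm_def, LinearEquiv.trans_apply, toEuclideanLin_submatrix_entry]


noncomputable def mulVec (A : Matrix (Σ k, κ k) (Σ k, κ k) 𝕜) (ξ : ℓ²(Σ k, κ k, 𝕜))
    (a : Σ k, κ k) : 𝕜 :=
  ∑' b, A a b * ξ b

section OfMatrix

variable [∀ k, DecidableEq (κ k)] {A : Matrix (Σ k, κ k) (Σ k, κ k) 𝕜}
  {c p : ι → ι → ℝ} {K M : ℝ}

theorem summable_norm_sq_row (hc : IsSchurWeight c p K)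
    (hA : ∀ k k', ‖A.submatrix (Sigma.mk k) (Sigma.mk k')‖ ≤ M * c k k') (a : Σ k, κ k) :
    Summable fun b => ‖A a b‖ ^ 2 := by
  refine (summable_sigma_of_nonneg fun _ => sq_nonneg _).2
    ⟨fun _ => (hasSum_fintype _).summable,
      .of_nonneg_of_le (fun _ => tsum_nonneg fun _ => sq_nonneg _) (fun k' => ?_)
        ((hc.summable_sq a.1).mul_left (M ^ 2))⟩
  rw [tsum_fintype, ← mul_pow]
  exact ((A.submatrix (Sigma.mk a.1) (Sigma.mk k')).sum_norm_sq_le_l2_opNorm_sq a.2).trans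
    (pow_le_pow_left₀ (norm_nonneg _) (hA a.1 k') 2)

theorem summable_mul (hc : IsSchurWeight c p K)
    (hA : ∀ k k', ‖A.submatrix (Sigma.mk k) (Sigma.mk k')‖ ≤ M * c k k')
    (ξ : ℓ²(Σ k, κ k, 𝕜)) (a : Σ k, κ k) :
    Summable fun b => A a b * ξ b :=
  .of_norm_bounded (((summable_norm_sq_row hc hA a).add (lp.hasSum_norm_sq ξ).summable).div_const 2)
    fun b => by rw [norm_mul]; nlinarith [two_mul_le_add_sq ‖A a b‖ ‖ξ b‖]

theorem hasSum_submatrix_mulVec (hc : IsSchurWeight c p K)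
    (hA : ∀ k k', ‖A.submatrix (Sigma.mk k) (Sigma.mk k')‖ ≤ M * c k k')
    (ξ : ℓ²(Σ k, κ k, 𝕜)) (k : ι) :
    HasSum (fun k' => (EuclideanSpace.equiv (κ k) 𝕜).symm
        (A.submatrix (Sigma.mk k) (Sigma.mk k') *ᵥ proj 𝕜 κ k' ξ))
      ((EuclideanSpace.equiv (κ k) 𝕜).symm fun l => mulVec A ξ ⟨k, l⟩) := by
  refine (EuclideanSpace.equiv (κ k) 𝕜).symm.hasSum'.2 (Pi.hasSum.2 fun l => ?_)
  exact (summable_mul hc hA ξ ⟨k, l⟩).hasSum.sigma fun k' => hasSum_fintype _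

theorem norm_mulVec_block_le (hc : IsSchurWeight c p K)
    (hA : ∀ k k', ‖A.submatrix (Sigma.mk k) (Sigma.mk k')‖ ≤ M * c k k')
    (ξ : ℓ²(Σ k, κ k, 𝕜)) (k : ι) :
    ‖(EuclideanSpace.equiv (κ k) 𝕜).symm fun l => mulVec A ξ ⟨k, l⟩‖ ≤
      M * ∑' k', c k k' * ‖proj 𝕜 κ k' ξ‖ := by
  have hs := (hc.summable_mul_and_sq_tsum_le k (fun k' => norm_nonneg (proj 𝕜 κ k' ξ))
    (hasSum_norm_proj_sq ξ).summable).1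
  refine (hasSum_submatrix_mulVec hc hA ξ k).norm_le_of_bounded (hs.hasSum.mul_left M)
    fun k' => ?_
  rw [← mul_assoc]
  exact (Matrix.l2_opNorm_mulVec _ _).trans
    (mul_le_mul_of_nonneg_right (hA k k') (norm_nonneg _))

theorem summable_and_tsum_norm_mulVec_sq_le (hc : IsSchurWeight c p K)
    (hA : ∀ k k', ‖A.submatrix (Sigma.mk k) (Sigma.mk k')‖ ≤ M * c k k')
    (ξ : ℓ²(Σ k, κ k, 𝕜)) :
    Summable (fun a => ‖mulVec A ξ a‖ ^ 2) ∧
      ∑' a, ‖mulVec A ξ a‖ ^ 2 ≤ (M * K * ‖ξ‖) ^ 2 := by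
  obtain ⟨hS, hSle⟩ := hc.summable_and_tsum_sq_tsum_mul_le
    (fun k' => norm_nonneg (proj 𝕜 κ k' ξ)) (hasSum_norm_proj_sq ξ).summable
  have hblock (k : ι) : ∑' l, ‖mulVec A ξ ⟨k, l⟩‖ ^ 2 ≤
      M ^ 2 * (∑' k', c k k' * ‖proj 𝕜 κ k' ξ‖) ^ 2 := by
    rw [tsum_fintype, ← mul_pow]
    simpa [EuclideanSpace.norm_sq_eq] using
      pow_le_pow_left₀ (norm_nonneg _) (norm_mulVec_block_le hc hA ξ k) 2
  have hmarg : Summable fun k => ∑' l, ‖mulVec A ξ ⟨k, l⟩‖ ^ 2 :=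
    .of_nonneg_of_le (fun _ => tsum_nonneg fun _ => sq_nonneg _) hblock (hS.mul_left _)
  have hsum : Summable fun a => ‖mulVec A ξ a‖ ^ 2 :=
    (summable_sigma_of_nonneg fun _ => sq_nonneg _).2
      ⟨fun _ => (hasSum_fintype _).summable, hmarg⟩
  refine ⟨hsum, ?_⟩
  calc ∑' a, ‖mulVec A ξ a‖ ^ 2
      = ∑' k, ∑' l, ‖mulVec A ξ ⟨k, l⟩‖ ^ 2 :=
        hsum.tsum_sigma' fun _ => (hasSum_fintype _).summable
    _ ≤ ∑' k, M ^ 2 * (∑' k', c k k' * ‖proj 𝕜 κ k' ξ‖) ^ 2 :=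
        hmarg.tsum_le_tsum hblock (hS.mul_left _)
    _ ≤ M ^ 2 * (K ^ 2 * ‖ξ‖ ^ 2) := by
        rw [tsum_mul_left, ← (hasSum_norm_proj_sq ξ).tsum_eq]
        exact mul_le_mul_of_nonneg_left hSle (sq_nonneg M)
    _ = (M * K * ‖ξ‖) ^ 2 := by ring

noncomputable def ofMatrix (hc : IsSchurWeight c p K)
    (hA : ∀ k k', ‖A.submatrix (Sigma.mk k) (Sigma.mk k')‖ ≤ M * c k k') :
    ℓ²(Σ k, κ k, 𝕜) →L[𝕜] ℓ²(Σ k, κ k, 𝕜) :=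
  LinearMap.mkContinuous
    { toFun ξ := ⟨mulVec A ξ, memℓp_gen (by
        simpa using (summable_and_tsum_norm_mulVec_sq_le hc hA ξ).1)⟩
      map_add' ξ η := lp.ext <| funext fun a => by
        simp only [mulVec, lp.coeFn_add, Pi.add_apply, mul_add]
        exact (summable_mul hc hA ξ a).tsum_add (summable_mul hc hA η a)
      map_smul' z ξ := lp.ext <| funext fun a => by
        simp only [mulVec, lp.coeFn_smul, Pi.smul_apply, smul_eq_mul, RingHom.id_apply,
          mul_left_comm _ z, tsum_mul_left] }
    |M * K| fun ξ => by
      refine lp.norm_le_of_tsum_le (by norm_num) (by positivity) ?_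
      simpa [mul_pow, sq_abs] using (summable_and_tsum_norm_mulVec_sq_le hc hA ξ).2

theorem ofMatrix_apply (hc : IsSchurWeight c p K)
    (hA : ∀ k k', ‖A.submatrix (Sigma.mk k) (Sigma.mk k')‖ ≤ M * c k k')
    (ξ : ℓ²(Σ k, κ k, 𝕜)) (a : Σ k, κ k) :
    ofMatrix hc hA ξ a = ∑' b, A a b * ξ b := rfl

theorem entry_ofMatrix (hc : IsSchurWeight c p K)
    (hA : ∀ k k', ‖A.submatrix (Sigma.mk k) (Sigma.mk k')‖ ≤ M * c k k') :
    entry (ofMatrix hc hA) = A := by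
  ext a b
  rw [entry, ofMatrix_apply, tsum_eq_single b fun b' hb' => by simp [lp.single_apply, hb']]
  simp

theorem norm_block_ofMatrix_le (hc : IsSchurWeight c p K)
    (hA : ∀ k k', ‖A.submatrix (Sigma.mk k) (Sigma.mk k')‖ ≤ M * c k k') (k k' : ι) :
    ‖block k k' (ofMatrix hc hA)‖ ≤ M * c k k' := by
  rw [← norm_submatrix_entry, entry_ofMatrix]
  exact hA k k'

end OfMatrix

section Exp

variable {c p : ι → ι → ℝ} {K M : ℝ}

theorem norm_block_comp_le (hc : IsSchurWeight c p K)
    {S T : ℓ²(Σ k, κ k, 𝕜) →L[𝕜] ℓ²(Σ k, κ k, 𝕜)} {M₁ M₂ : ℝ} (hM₁ : 0 ≤ M₁) (hM₂ : 0 ≤ M₂)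
    (hS : ∀ k k', ‖block k k' S‖ ≤ M₁ * c k k') (hT : ∀ k k', ‖block k k' T‖ ≤ M₂ * c k k')
    (k₁ k₂ : ι) :
    ‖block k₁ k₂ (S ∘L T)‖ ≤ 2 * K * M₁ * M₂ * c k₁ k₂ := by
  have hK := hc.const_nonneg k₁
  have hc₁₂ := hc.nonneg k₁ k₂
  refine ContinuousLinearMap.opNorm_le_bound _ (by positivity) fun v => ?_
  have hterm (k : ι) : ‖block k₁ k S (block k k₂ T v)‖ ≤ M₁ * M₂ * ‖v‖ * (c k₁ k * c k k₂) :=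
    calc ‖block k₁ k S (block k k₂ T v)‖
        ≤ ‖block k₁ k S‖ * (‖block k k₂ T‖ * ‖v‖) :=
          (ContinuousLinearMap.le_opNorm _ _).trans
            (mul_le_mul_of_nonneg_left (ContinuousLinearMap.le_opNorm _ _) (norm_nonneg _))
      _ ≤ (M₁ * c k₁ k) * ((M₂ * c k k₂) * ‖v‖) := by
          gcongr
          exacts [(norm_nonneg _).trans (hS k₁ k), hS k₁ k, hT k k₂]
      _ = M₁ * M₂ * ‖v‖ * (c k₁ k * c k k₂) := by ring
  calc ‖block k₁ k₂ (S ∘L T) v‖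
      ≤ M₁ * M₂ * ‖v‖ * ∑' k, c k₁ k * c k k₂ :=
        (hasSum_block_comp S T k₁ k₂ v).norm_le_of_bounded
          ((hc.summable_mul_mul k₁ k₂).hasSum.mul_left _) hterm
    _ ≤ M₁ * M₂ * ‖v‖ * (2 * K * c k₁ k₂) := by
        gcongr
        exact hc.tsum_mul_mul_le k₁ k₂
    _ = 2 * K * M₁ * M₂ * c k₁ k₂ * ‖v‖ := by ring

theorem norm_block_pow_succ_le (hc : IsSchurWeight c p K)
    {T : ℓ²(Σ k, κ k, 𝕜) →L[𝕜] ℓ²(Σ k, κ k, 𝕜)} (hM : 0 ≤ M)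
    (hT : ∀ k k', ‖block k k' T‖ ≤ M * c k k') (n : ℕ) (k k' : ι) :
    ‖block k k' (T ^ (n + 1))‖ ≤ M * (2 * K * M) ^ n * c k k' := by
  induction n generalizing k k' with
  | zero => simpa using hT k k'
  | succ n ih =>
    have hK := hc.const_nonneg k
    rw [pow_succ']
    calc ‖block k k' (T ∘L T ^ (n + 1))‖
        ≤ 2 * K * M * (M * (2 * K * M) ^ n) * c k k' :=
          norm_block_comp_le hc hM (by positivity) hT ih k k'
      _ = M * (2 * K * M) ^ (n + 1) * c k k' := by ring

theorem norm_block_exp_sub_one_le (hc : IsSchurWeight c p K)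
    {T : ℓ²(Σ k, κ k, 𝕜) →L[𝕜] ℓ²(Σ k, κ k, 𝕜)} (hM : 0 ≤ M)
    (hT : ∀ k k', ‖block k k' T‖ ≤ M * c k k') (k k' : ι) :
    ‖block k k' (NormedSpace.exp T - 1)‖ ≤ Real.exp (2 * K * M) * M * c k k' := by
  have hexp : HasSum (fun n => ((n + 1)! : 𝕜)⁻¹ • T ^ (n + 1)) (NormedSpace.exp T - 1) := by
    simpa using (hasSum_nat_add_iff' 1).2 (NormedSpace.exp_series_hasSum_exp' (𝕂 := 𝕜) T)
  have hreal : HasSum (fun n => (2 * K * M) ^ n / n !) (Real.exp (2 * K * M)) :=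
    Real.exp_eq_exp_ℝ ▸ NormedSpace.expSeries_div_hasSum_exp (2 * K * M)
  have hterm (n : ℕ) : ‖block k k' (((n + 1)! : 𝕜)⁻¹ • T ^ (n + 1))‖ ≤
      M * c k k' * ((2 * K * M) ^ n / n !) := by
    have hK := hc.const_nonneg k
    have hc' := hc.nonneg k k'
    rw [map_smul, norm_smul, norm_inv, RCLike.norm_natCast]
    calc ((n + 1)! : ℝ)⁻¹ * ‖block k k' (T ^ (n + 1))‖
        ≤ (n ! : ℝ)⁻¹ * (M * (2 * K * M) ^ n * c k k') := by
          gcongr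
          exacts [n.le_succ, norm_block_pow_succ_le hc hM hT n k k']
      _ = M * c k k' * ((2 * K * M) ^ n / n !) := by ring
  calc ‖block k k' (NormedSpace.exp T - 1)‖
      ≤ M * c k k' * Real.exp (2 * K * M) :=
        ((block k k').hasSum hexp).norm_le_of_bounded (hreal.mul_left _) hterm
    _ = Real.exp (2 * K * M) * M * c k k' := by ring

end Exp

end BlockOperator


noncomputable def bertrand (γ : ℝ) (n : ℕ) : ℝ :=
  (((n : ℝ) + 1) * (1 + Real.log ((n : ℝ) + 1)) ^ γ)⁻¹

theorem one_le_one_add_log {x : ℝ} (hx : 1 ≤ x) : 1 ≤ 1 + Real.log x := by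
  linarith [Real.log_nonneg hx]

theorem bertrand_nonneg (γ : ℝ) (n : ℕ) : 0 ≤ bertrand γ n := by
  have := one_le_one_add_log (by linarith [n.cast_nonneg (α := ℝ)] : (1 : ℝ) ≤ n + 1)
  unfold bertrand
  positivity

theorem summable_bertrand {γ : ℝ} (hγ : 1 < γ) : Summable (bertrand γ) := by
  have hL (n : ℕ) := one_le_one_add_log (by linarith [n.cast_nonneg (α := ℝ)] : (1 : ℝ) ≤ n + 1)
  refine (summable_condensed_iff_of_nonneg (bertrand_nonneg γ) fun m n _ hmn => ?_).1 ?_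
  · have hmn' : (m : ℝ) + 1 ≤ n + 1 := by exact_mod_cast Nat.add_le_add_right hmn 1
    have := hL m
    unfold bertrand
    gcongr
  have hlog2 : 0 < Real.log 2 := Real.log_pos one_lt_two
  refine .of_nonneg_of_le (fun n => mul_nonneg (by positivity) (bertrand_nonneg γ _))
    (fun n => ?_) (((summable_nat_add_iff 1).2 (Real.summable_nat_rpow_inv.2 hγ)).mul_left
      (Real.log 2 ^ γ)⁻¹)
  have hL2 : ((n : ℝ) + 1) * Real.log 2 ≤ 1 + Real.log (((2 ^ n : ℕ) : ℝ) + 1) := by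
    have h1 : Real.log 2 ≤ 1 := by linarith [Real.log_le_sub_one_of_pos two_pos]
    have h2 : (n : ℝ) * Real.log 2 ≤ Real.log (((2 ^ n : ℕ) : ℝ) + 1) := by
      rw [← Real.log_pow]
      exact Real.log_le_log (by positivity) (by push_cast; linarith)
    linarith
  calc (2 : ℝ) ^ n * bertrand γ (2 ^ n)
      ≤ ((1 + Real.log (((2 ^ n : ℕ) : ℝ) + 1)) ^ γ)⁻¹ := by
        have := hL (2 ^ n)
        rw [bertrand, mul_inv, ← mul_assoc]
        refine mul_le_of_le_one_left (by positivity) ?_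
        rw [← div_eq_mul_inv, div_le_one (by positivity)]
        push_cast; linarith
    _ ≤ ((((n + 1 : ℕ) : ℝ) * Real.log 2) ^ γ)⁻¹ := by
        push_cast at hL2 ⊢
        gcongr
    _ = (Real.log 2 ^ γ)⁻¹ * (((n + 1 : ℕ) : ℝ) ^ γ)⁻¹ := by
        rw [Real.mul_rpow (by positivity) hlog2.le, mul_inv, mul_comm]

theorem summable_bertrand_natAbs {γ : ℝ} (hγ : 1 < γ) :
    Summable fun z : ℤ => bertrand γ z.natAbs :=
  .of_nat_of_neg (by simpa using summable_bertrand hγ) (by simpa using summable_bertrand hγ)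

noncomputable def logBracket (d k : ℕ) : ℝ := 1 + Real.log ((d : ℝ) + 2 * k)

noncomputable def rowKernel (d : ℕ) (γ : ℝ) (k m : ℕ) : ℝ :=
  ((1 + |((d : ℝ) + 2 * k) - ((d : ℝ) + 2 * m)|) * logBracket d m ^ γ)⁻¹

theorem one_le_logBracket {d : ℕ} (hd : 1 ≤ d) (k : ℕ) : 1 ≤ logBracket d k :=
  one_le_one_add_log (by linarith [(Nat.one_le_cast.2 hd : (1 : ℝ) ≤ d), k.cast_nonneg (α := ℝ)])

theorem rowKernel_nonneg {d : ℕ} (hd : 1 ≤ d) (γ : ℝ) (k m : ℕ) : 0 ≤ rowKernel d γ k m := by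
  have := one_le_logBracket hd m
  unfold rowKernel
  positivity

theorem rowKernel_le {d : ℕ} (hd : 1 ≤ d) {γ : ℝ} (hγ : 0 ≤ γ) (k m : ℕ) :
    rowKernel d γ k m ≤
      bertrand γ ((m : ℤ) - k).natAbs + if m < k then ((k : ℝ) + 1)⁻¹ else 0 := by
  have hgap : |((d : ℝ) + 2 * k) - ((d : ℝ) + 2 * m)| = 2 * |(m : ℝ) - k| := by
    rw [show ((d : ℝ) + 2 * k) - ((d : ℝ) + 2 * m) = -(2 * ((m : ℝ) - k)) by ring, abs_neg,
      abs_mul, abs_two]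
  have hL := one_le_logBracket hd m
  have hd' : (1 : ℝ) ≤ d := by exact_mod_cast hd
  -- Either `k ≤ 2m`, so that `|m - k| ≤ m` and the logarithm at `m` dominates the one at
  -- `|m - k|`, or `2m < k` and the gap alone is at least `k + 1`.
  rcases le_or_gt k (2 * m) with hkm | hkm
  · have ht : (((m : ℤ) - k).natAbs : ℝ) = |(m : ℝ) - k| := by
      rw [Nat.cast_natAbs, Int.cast_abs]; push_cast; rfl
    have htm : |(m : ℝ) - k| ≤ m := by
      have : (k : ℝ) ≤ 2 * m := by exact_mod_cast hkm
      rw [abs_le]; constructor <;> linarith [k.cast_nonneg (α := ℝ)]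
    refine le_add_of_le_of_nonneg ?_ (by split_ifs <;> positivity)
    rw [rowKernel, bertrand, hgap, ht]
    have h1 : 1 ≤ |(m : ℝ) - k| + 1 := by linarith [abs_nonneg ((m : ℝ) - k)]
    have h2 := one_le_one_add_log h1
    refine inv_anti₀ (by positivity) (mul_le_mul (by linarith [abs_nonneg ((m : ℝ) - k)])
      (Real.rpow_le_rpow (by positivity) ?_ hγ) (by positivity) (by positivity))
    unfold logBracket
    linarith [Real.log_le_log (by positivity)
      (show |(m : ℝ) - k| + 1 ≤ d + 2 * m by linarith [m.cast_nonneg (α := ℝ)])]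
  · have hmk : m < k := by omega
    refine le_add_of_nonneg_of_le (bertrand_nonneg _ _) ?_
    rw [if_pos hmk, rowKernel, hgap, abs_sub_comm, abs_of_nonneg (by
      have : (m : ℝ) < k := by exact_mod_cast hmk
      linarith)]
    have : (2 * m : ℝ) < k := by exact_mod_cast hkm
    have := Real.one_le_rpow hL hγ
    gcongr
    nlinarith

theorem summable_rowKernel_and_tsum_le {d : ℕ} (hd : 1 ≤ d) {γ : ℝ} (hγ : 1 < γ) (k : ℕ) :
    Summable (rowKernel d γ k) ∧ ∑' m, rowKernel d γ k m ≤ 1 + ∑' z : ℤ, bertrand γ z.natAbs := by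
  have hinj : Function.Injective fun m : ℕ => (m : ℤ) - k := fun m m' h => by simpa using h
  have hfar : Summable fun m : ℕ => bertrand γ ((m : ℤ) - k).natAbs :=
    (summable_bertrand_natAbs hγ).comp_injective hinj
  have hnear : HasSum (fun m : ℕ => if m < k then ((k : ℝ) + 1)⁻¹ else 0)
      (k * ((k : ℝ) + 1)⁻¹) := by
    have h := hasSum_sum_of_ne_finset_zero (L := .unconditional ℕ) (s := Finset.range k)
      (f := fun m : ℕ => if m < k then ((k : ℝ) + 1)⁻¹ else 0)
      fun m hm => if_neg (not_lt.2 (by simpa using hm))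
    rwa [Finset.sum_ite_of_true fun m hm => Finset.mem_range.1 hm, Finset.sum_const,
      Finset.card_range, nsmul_eq_mul] at h
  have hbound := fun m => rowKernel_le hd (zero_le_one.trans hγ.le) k m
  have hsum := hfar.add hnear.summable
  refine ⟨.of_nonneg_of_le (rowKernel_nonneg hd γ k) hbound hsum, ?_⟩
  calc ∑' m, rowKernel d γ k m
      ≤ ∑' m : ℕ, (bertrand γ ((m : ℤ) - k).natAbs + if m < k then ((k : ℝ) + 1)⁻¹ else 0) :=
        (Summable.of_nonneg_of_le (rowKernel_nonneg hd γ k) hbound hsum).tsum_le_tsum hbound hsum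
    _ = ∑' m : ℕ, bertrand γ ((m : ℤ) - k).natAbs + k * ((k : ℝ) + 1)⁻¹ := by
        rw [hfar.tsum_add hnear.summable, hnear.tsum_eq]
    _ ≤ ∑' z : ℤ, bertrand γ z.natAbs + 1 := by
        gcongr
        · exact tsum_comp_le_tsum_of_inj (summable_bertrand_natAbs hγ)
            (fun z => bertrand_nonneg γ _) hinj
        · rw [← div_eq_mul_inv, div_le_one (by positivity)]
          linarith
    _ = 1 + ∑' z : ℤ, bertrand γ z.natAbs := add_comm _ _

theorem wtBetaPlus_eq (d : ℕ) (β : ℝ) (k k' : ℕ) :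
    wtBetaPlus d β k k' =
      (1 + |((d : ℝ) + 2 * k) - ((d : ℝ) + 2 * k')|) * (logBracket d k ^ β * logBracket d k' ^ β) :=
  rfl

theorem wtBetaPlus_pos {d : ℕ} (hd : 1 ≤ d) {β : ℝ} (k k' : ℕ) : 0 < wtBetaPlus d β k k' := by
  have := one_le_logBracket hd k
  have := one_le_logBracket hd k'
  rw [wtBetaPlus_eq]
  positivity

theorem logBracket_rpow_two_mul {d : ℕ} (hd : 1 ≤ d) (β : ℝ) (k : ℕ) :
    logBracket d k ^ (2 * β) = (logBracket d k ^ β) ^ 2 := by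
  rw [mul_comm, Real.rpow_mul (zero_le_one.trans (one_le_logBracket hd k)), Real.rpow_two]

theorem inv_wtBetaPlus_sq {d : ℕ} (hd : 1 ≤ d) (β : ℝ) (k k' : ℕ) :
    (wtBetaPlus d β k k')⁻¹ ^ 2 = rowKernel d (2 * β) k k' * rowKernel d (2 * β) k' k := by
  rw [rowKernel, rowKernel, wtBetaPlus_eq, abs_sub_comm ((d : ℝ) + 2 * k'),
    logBracket_rpow_two_mul hd, logBracket_rpow_two_mul hd, ← mul_inv, inv_pow]
  ring

theorem inv_wtBetaPlus_mul_le {d : ℕ} (hd : 1 ≤ d) (β : ℝ) (k₁ k k₂ : ℕ) :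
    (wtBetaPlus d β k₁ k)⁻¹ * (wtBetaPlus d β k k₂)⁻¹ ≤
      (wtBetaPlus d β k₁ k₂)⁻¹ * (rowKernel d (2 * β) k₁ k + rowKernel d (2 * β) k₂ k) := by
  have htri : 1 + |((d : ℝ) + 2 * k₁) - ((d : ℝ) + 2 * k₂)| ≤
      (1 + |((d : ℝ) + 2 * k₁) - ((d : ℝ) + 2 * k)|) +
        (1 + |((d : ℝ) + 2 * k) - ((d : ℝ) + 2 * k₂)|) := by
    linarith [abs_sub_le ((d : ℝ) + 2 * k₁) ((d : ℝ) + 2 * k) ((d : ℝ) + 2 * k₂)]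
  simp only [rowKernel, wtBetaPlus_eq, logBracket_rpow_two_mul hd,
    abs_sub_comm ((d : ℝ) + 2 * k₂)]
  have hP : 0 < logBracket d k₁ ^ β := by have := one_le_logBracket hd k₁; positivity
  have hQ : 0 < logBracket d k₂ ^ β := by have := one_le_logBracket hd k₂; positivity
  have hR : 0 < logBracket d k ^ β := by have := one_le_logBracket hd k; positivity
  have ha : 0 < 1 + |((d : ℝ) + 2 * k₁) - ((d : ℝ) + 2 * k)| := by positivity
  have hb : 0 < 1 + |((d : ℝ) + 2 * k) - ((d : ℝ) + 2 * k₂)| := by positivity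
  have he : 0 < 1 + |((d : ℝ) + 2 * k₁) - ((d : ℝ) + 2 * k₂)| := by positivity
  generalize logBracket d k₁ ^ β = P at *
  generalize logBracket d k₂ ^ β = Q at *
  generalize logBracket d k ^ β = R at *
  generalize 1 + |((d : ℝ) + 2 * k₁) - ((d : ℝ) + 2 * k)| = a at *
  generalize 1 + |((d : ℝ) + 2 * k) - ((d : ℝ) + 2 * k₂)| = b at *
  generalize 1 + |((d : ℝ) + 2 * k₁) - ((d : ℝ) + 2 * k₂)| = e at *
  have key : (e * (P * Q))⁻¹ * ((a * R ^ 2)⁻¹ + (b * R ^ 2)⁻¹) =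
      (a + b) / e * ((a * (P * R))⁻¹ * (b * (R * Q))⁻¹) := by
    field_simp
    ring
  rw [key]
  exact le_mul_of_one_le_left (by positivity) ((one_le_div he).2 htri)

theorem isSchurWeight_inv_wtBetaPlus {d : ℕ} (hd : 1 ≤ d) {β : ℝ} (hβ : 1 / 2 < β) :
    IsSchurWeight (fun k k' => (wtBetaPlus d β k k')⁻¹) (rowKernel d (2 * β))
      (1 + ∑' z : ℤ, bertrand (2 * β) z.natAbs) where
  nonneg k k' := inv_nonneg.2 (wtBetaPlus_pos hd k k').le
  kernel_nonneg := rowKernel_nonneg hd _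
  summable_kernel k := (summable_rowKernel_and_tsum_le hd (by linarith) k).1
  tsum_kernel_le k := (summable_rowKernel_and_tsum_le hd (by linarith) k).2
  sq_le k k' := (inv_wtBetaPlus_sq hd β k k').le
  mul_le := inv_wtBetaPlus_mul_le hd β

theorem exists_isSchurWeight_inv_wtBetaPlus {d : ℕ} (hd : 1 ≤ d) {β : ℝ} (hβ : 1 / 2 < β) :
    ∃ K > 0, IsSchurWeight (fun k k' => (wtBetaPlus d β k k')⁻¹) (rowKernel d (2 * β)) K :=
  ⟨_, add_pos_of_pos_of_nonneg one_pos (tsum_nonneg fun _ => bertrand_nonneg _ _),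
    isSchurWeight_inv_wtBetaPlus hd hβ⟩

open BlockOperator

theorem stmt7 (d : ℕ) (hd : 1 ≤ d) (β : ℝ) (hβ : 1 / 2 < β) :
    ∃ C > 0, ∀ (A : IndexE d → IndexE d → ℂ) (MA : ℝ),
      (∀ k k', wtBetaPlus d β k k' * blockNorm d A k k' ≤ MA) →
      ∃ T : lp (fun _ : IndexE d => ℂ) 2 →L[ℂ] lp (fun _ : IndexE d => ℂ) 2,
        (∀ (ξ : lp (fun _ : IndexE d => ℂ) 2) (a : IndexE d),
          Summable (fun b : IndexE d => A a b * ξ b) ∧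
          T ξ a = ∑' b : IndexE d, A a b * ξ b) ∧
        (∀ k k', wtBetaPlus d β k k' *
          blockNorm d (fun a b =>
            (NormedSpace.exp T) (lp.single 2 b (1 : ℂ)) a -
              (if a = b then 1 else 0)) k k' ≤ Real.exp (C * MA) * MA) := by
  obtain ⟨K, hK, hc⟩ := exists_isSchurWeight_inv_wtBetaPlus hd hβ
  refine ⟨2 * K, by positivity, fun A MA hA => ?_⟩
  have hwt := wtBetaPlus_pos (β := β) hd
  have hMA : 0 ≤ MA := (mul_nonneg (hwt 0 0).le (norm_nonneg _)).trans (hA 0 0)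
  have hA' (k k' : ℕ) : ‖Matrix.submatrix A (Sigma.mk k) (Sigma.mk k')‖ ≤
      MA * (wtBetaPlus d β k k')⁻¹ := by
    rw [← div_eq_mul_inv, le_div_iff₀ (hwt k k'), mul_comm]
    exact hA k k'
  set T := ofMatrix hc hA'
  refine ⟨T, fun ξ a => ⟨summable_mul hc hA' ξ a, rfl⟩, fun k k' => ?_⟩
  have hentry : (fun a b => (NormedSpace.exp T) (lp.single 2 b (1 : ℂ)) a -
      (if a = b then 1 else 0)) = entry (NormedSpace.exp T - 1) := by
    ext a b
    exact (entry_sub_one (𝕜 := ℂ) _ a b).symm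
  calc _ = wtBetaPlus d β k k' * ‖block k k' (NormedSpace.exp T - 1)‖ := by
        rw [hentry, ← norm_submatrix_entry]
        rfl
    _ ≤ wtBetaPlus d β k k' * (Real.exp (2 * K * MA) * MA * (wtBetaPlus d β k k')⁻¹) :=
        mul_le_mul_of_nonneg_left (norm_block_exp_sub_one_le hc hMA
          (norm_block_ofMatrix_le hc hA') k k') (hwt k k').le
    _ = Real.exp (2 * K * MA) * MA := by
        field_simp [(hwt k k').ne']
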